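/- arXiv:0711.3208 — 3 statements merged into one kernel-verified Lean document; each statement's English description precedes it below -/
import Mathlib

section
/- Let α < β < x* be real numbers and define F(x) = log((√((x*−α)/(x*−β)) − √((x−α)/(x−β)))/(√((x*−α)/(x*−β)) + √((x−α)/(x−β)))) for complex x, where √((x−α)/(x−β)) = √((x−α)(x−β))/(x−β) with branch cut [α,β] and the principal branch of the logarithm is used. Then: (1) F is analytic on ℂ∖[α, x*]; (2) F₊(x) = −F₋(x) for x ∈ (α, β), where F_± denote boundary values from the upper/lower half plane; (3) F₊(x) = F₋(x) + 2πi for x ∈ (β, x*); (4) F(x) − log(x−x*) is bounded as x → x*; (5) F(x) → F₀ := log((√((x*−α)/(x*−β)) − 1)/(√((x*−α)/(x*−β)) + 1)) as x → ∞; (6) F is bounded in punctured neighborhoods of α and of β. -/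
/-!
Write `ratio z = (z - α) / (z - β)`, `r = √ratio` (principal branch) and `s = r(x*) > 1`, so that
`F = log Q` with `Q = (s - r) / (s + r)`. Since `Re r ≥ 0`, the denominator never vanishes, and `Q`
maps each open half-plane into itself: `ratio` swaps them, `√` preserves them and
`u ↦ (s - u) / (s + u)` swaps them. So `Q` avoids the cut of `log` off the real axis, and on the
real axis outside `[α, x*]` it is positive.

On `(α, β)` the ratio is negative, `r` has boundary values `∓ c i` from above and below, and
`u ↦ (s - u) / (s + u)` turns `u ↦ -u` into inversion, so the boundary values of `F` are opposite.
On `(β, x*)` the function `Q` is continuous with a negative value and `log` jumps by `2πi`.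
Near `x*` one has `Q = (z - x*) g(z)` with `g` continuous and nonzero at `x*`, because
`s² - r² = ratio x* - ratio z`. Near `α`, `Q → 1`, and near `β`, `r → ∞` so `Q → -1`: in both cases
`|Q| → 1`, which bounds `log Q`.
-/

open Filter Set Complex Topology Bornology
open scoped Real

namespace Complex

lemma re_sqrt_nonneg (w : ℂ) : 0 ≤ w.sqrt.re := by
  rw [sqrt, cpow_inv_two_re]
  exact Real.sqrt_nonneg _

lemma sqrt_im_neg {w : ℂ} (hw : w.im < 0) : w.sqrt.im < 0 := by
  rw [sqrt, cpow_inv_two_im_eq_neg_sqrt hw, neg_lt_zero, Real.sqrt_pos]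
  linarith [abs_re_lt_norm.2 hw.ne, le_abs_self w.re]

lemma sqrt_im_pos {w : ℂ} (hw : 0 < w.im) : 0 < w.sqrt.im := by
  rw [sqrt, cpow_inv_two_im_eq_sqrt hw.le, Real.sqrt_pos]
  linarith [abs_re_lt_norm.2 hw.ne', le_abs_self w.re]

lemma sqrt_sq (w : ℂ) : w.sqrt ^ 2 = w := cpow_ofNat_inv_pow w 2

lemma norm_sqrt (w : ℂ) : ‖w.sqrt‖ = √‖w‖ := by
  rw [sqrt, Real.sqrt_eq_rpow]
  simpa using norm_cpow_inv_nat w 2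

lemma sqrt_ofReal {x : ℝ} (hx : 0 ≤ x) : (x : ℂ).sqrt = √x := by
  rw [sqrt_of_nonneg (zero_le_real.2 hx), ofReal_re]

lemma tendsto_sqrt_cobounded : Tendsto sqrt (cobounded ℂ) (cobounded ℂ) := by
  simp only [← tendsto_norm_atTop_iff_cobounded, norm_sqrt]
  exact Real.tendsto_sqrt_atTop.comp tendsto_norm_cobounded_atTop

/- On each open half-plane `sqrt` agrees with one of the continuous functions
`√((‖w‖ + re w) / 2) ± √((‖w‖ - re w) / 2) i` (`Complex.sqrt_eq_real_add_ite`), whose values at a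
negative real `a` are `± √(-a) i`. -/
lemma tendsto_sqrt_nhdsWithin_im_pos_of_neg {a : ℝ} (ha : a < 0) :
    Tendsto sqrt (𝓝[{w | 0 < w.im}] (a : ℂ)) (𝓝 (√(-a) * I)) := by
  have hcont : Continuous fun w : ℂ => (√((‖w‖ + w.re) / 2) : ℂ) + √((‖w‖ - w.re) / 2) * I := by
    fun_prop
  have hval : (√((‖(a : ℂ)‖ + (a : ℂ).re) / 2) : ℂ) + √((‖(a : ℂ)‖ - (a : ℂ).re) / 2) * I
      = √(-a) * I := by
    rw [norm_real, Real.norm_eq_abs, abs_of_neg ha, ofReal_re]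
    ring_nf
    simp
  refine (hval ▸ (hcont.tendsto (a : ℂ)).mono_left nhdsWithin_le_nhds).congr' ?_
  filter_upwards [self_mem_nhdsWithin] with w (hw : 0 < w.im)
  simp [sqrt_eq_real_add_ite, hw.le]

lemma tendsto_sqrt_nhdsWithin_im_neg_of_neg {a : ℝ} (ha : a < 0) :
    Tendsto sqrt (𝓝[{w | w.im < 0}] (a : ℂ)) (𝓝 (-(√(-a) * I))) := by
  have hcont : Continuous fun w : ℂ => (√((‖w‖ + w.re) / 2) : ℂ) - √((‖w‖ - w.re) / 2) * I := by
    fun_prop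
  have hval : (√((‖(a : ℂ)‖ + (a : ℂ).re) / 2) : ℂ) - √((‖(a : ℂ)‖ - (a : ℂ).re) / 2) * I
      = -(√(-a) * I) := by
    rw [norm_real, Real.norm_eq_abs, abs_of_neg ha, ofReal_re]
    ring_nf
    simp
  refine (hval ▸ (hcont.tendsto (a : ℂ)).mono_left nhdsWithin_le_nhds).congr' ?_
  filter_upwards [self_mem_nhdsWithin] with w (hw : w.im < 0)
  simp [sqrt_eq_real_add_ite, hw.not_ge, sub_eq_add_neg]

lemma norm_log_le (w : ℂ) : ‖log w‖ ≤ |Real.log ‖w‖| + π := by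
  calc ‖log w‖ ≤ |(log w).re| + |(log w).im| := norm_le_abs_re_add_abs_im _
    _ ≤ |Real.log ‖w‖| + π := by rw [log_re, log_im]; linarith [abs_arg_le_pi w]

lemma norm_log_mul_sub_log_le {a b : ℂ} (ha : a ≠ 0) (hb : b ≠ 0) :
    ‖log (b * a) - log b‖ ≤ |Real.log ‖a‖| + 2 * π := by
  have hre : (log (b * a) - log b).re = Real.log ‖a‖ := by
    rw [sub_re, log_re, log_re, norm_mul,
      Real.log_mul (norm_ne_zero_iff.2 hb) (norm_ne_zero_iff.2 ha)]
    ring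
  have him : |(log (b * a) - log b).im| ≤ 2 * π := by
    rw [sub_im, log_im, log_im]
    linarith [abs_sub (b * a).arg b.arg, abs_arg_le_pi (b * a), abs_arg_le_pi b]
  calc ‖log (b * a) - log b‖ ≤ |(log (b * a) - log b).re| + |(log (b * a) - log b).im| :=
        norm_le_abs_re_add_abs_im _
    _ ≤ |Real.log ‖a‖| + 2 * π := by rw [hre]; linarith

lemma tendsto_ofReal_add_mul_I_nhdsGT (x : ℝ) :
    Tendsto (fun ε : ℝ => (x : ℂ) + ε * I) (𝓝[>] 0) (𝓝[{z | 0 < z.im}] (x : ℂ)) := by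
  have h := ((by fun_prop : Continuous fun ε : ℝ => (x : ℂ) + ε * I).continuousWithinAt
    (s := Ioi 0) (x := 0)).tendsto_nhdsWithin (t := {z | 0 < z.im}) fun ε hε => by simpa using hε
  simpa using h

lemma tendsto_ofReal_add_mul_I_nhdsLT (x : ℝ) :
    Tendsto (fun ε : ℝ => (x : ℂ) + ε * I) (𝓝[<] 0) (𝓝[{z | z.im < 0}] (x : ℂ)) := by
  have h := ((by fun_prop : Continuous fun ε : ℝ => (x : ℂ) + ε * I).continuousWithinAt
    (s := Iio 0) (x := 0)).tendsto_nhdsWithin (t := {z | z.im < 0}) fun ε hε => by simpa using hε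
  simpa using h

end Complex

lemma Filter.Tendsto.eventually_abs_log_norm_le {X : Type*} {l : Filter X} {f : X → ℂ} {c : ℂ}
    (hf : Tendsto f l (𝓝 c)) (hc : c ≠ 0) :
    ∀ᶠ x in l, |Real.log ‖f x‖| ≤ |Real.log ‖c‖| + 1 := by
  have hlog : Tendsto (fun x => Real.log ‖f x‖) l (𝓝 (Real.log ‖c‖)) :=
    hf.norm.log (norm_ne_zero_iff.2 hc)
  filter_upwards [hlog.eventually (Metric.closedBall_mem_nhds _ one_pos)] with x hx
  rw [Real.dist_eq] at hx
  linarith [abs_sub_abs_le_abs_sub (Real.log ‖f x‖) (Real.log ‖c‖)]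

lemma exists_pos_of_eventually_nhdsNE {E : Type*} [SeminormedAddCommGroup E] {a : E}
    {p : E → Prop} (h : ∀ᶠ z in 𝓝[≠] a, p z) : ∃ δ > 0, ∀ z, z ≠ a → ‖z - a‖ < δ → p z := by
  obtain ⟨δ, hδ, hp⟩ := Metric.eventually_nhds_iff.1 (eventually_nhdsWithin_iff.1 h)
  exact ⟨δ, hδ, fun z hz hzδ => hp (by rwa [dist_eq_norm]) hz⟩

namespace DegenerateAbelianIntegral

noncomputable def cayley (s : ℝ) (u : ℂ) : ℂ := (s - u) / (s + u)

section Cayley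

variable {s : ℝ} {u : ℂ}

lemma ofReal_add_ne_zero (hs : 0 < s) (hu : 0 ≤ u.re) : (s : ℂ) + u ≠ 0 := by
  intro h
  have := congrArg re h
  simp only [add_re, ofReal_re, zero_re] at this
  linarith

lemma im_cayley (s : ℝ) (u : ℂ) : (cayley s u).im = -2 * s * u.im / normSq (s + u) := by
  rw [cayley, div_im, div_sub_div_same]
  congr 1
  simp only [sub_re, sub_im, add_re, add_im, ofReal_re, ofReal_im]
  ring

lemma normSq_ofReal_add_pos (hu : u.im ≠ 0) : 0 < normSq ((s : ℂ) + u) :=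
  normSq_pos.2 fun h => hu (by simpa using congrArg im h)

lemma cayley_im_pos (hs : 0 < s) (hu : u.im < 0) : 0 < (cayley s u).im := by
  rw [im_cayley]
  exact div_pos (by nlinarith) (normSq_ofReal_add_pos hu.ne)

lemma cayley_im_neg (hs : 0 < s) (hu : 0 < u.im) : (cayley s u).im < 0 := by
  rw [im_cayley]
  exact div_neg_of_neg_of_pos (by nlinarith) (normSq_ofReal_add_pos hu.ne')

lemma cayley_mem_slitPlane (hs : 0 < s) (hu : u.im ≠ 0) : cayley s u ∈ slitPlane := by
  refine mem_slitPlane_iff.2 (Or.inr ?_)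
  rcases hu.lt_or_gt with hu | hu
  exacts [(cayley_im_pos hs hu).ne', (cayley_im_neg hs hu).ne]

lemma cayley_ofReal (s ρ : ℝ) : cayley s ρ = ((s - ρ) / (s + ρ) : ℝ) := by
  push_cast
  rfl

lemma cayley_neg (s : ℝ) (u : ℂ) : cayley s (-u) = (cayley s u)⁻¹ := by
  rw [cayley, cayley, inv_div, sub_neg_eq_add, ← sub_eq_add_neg]

lemma cayley_eq_sub_sq_div (h : (s : ℂ) + u ≠ 0) : cayley s u = (s ^ 2 - u ^ 2) / (s + u) ^ 2 := by
  rw [cayley]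
  field_simp
  ring

lemma continuousAt_cayley (hs : 0 < s) (hu : 0 ≤ u.re) : ContinuousAt (cayley s) u :=
  (continuousAt_const.sub continuousAt_id).div (continuousAt_const.add continuousAt_id)
    (ofReal_add_ne_zero hs hu)

lemma tendsto_cayley_cobounded (s : ℝ) : Tendsto (cayley s) (cobounded ℂ) (𝓝 (-1)) := by
  have h : Tendsto (fun u : ℂ => (s * u⁻¹ - 1) / (s * u⁻¹ + 1)) (cobounded ℂ)
      (𝓝 ((s * 0 - 1) / (s * 0 + 1))) :=
    ((tendsto_const_nhds.mul tendsto_inv₀_cobounded).sub tendsto_const_nhds).div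
      ((tendsto_const_nhds.mul tendsto_inv₀_cobounded).add tendsto_const_nhds) (by simp)
  rw [show ((s : ℂ) * 0 - 1) / (s * 0 + 1) = -1 by simp] at h
  refine h.congr' ?_
  filter_upwards [eventually_ne_cobounded 0] with u hu
  rw [cayley, ← mul_div_mul_right _ _ hu]
  congr 1 <;> field_simp

end Cayley

noncomputable def ratio (α β : ℝ) (z : ℂ) : ℂ := (z - α) / (z - β)

section Ratio

variable {α β : ℝ} {z : ℂ}

lemma ratio_ofReal (α β x : ℝ) : ratio α β x = ((x - α) / (x - β) : ℝ) := by
  push_cast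
  rfl

lemma im_ratio (α β : ℝ) (z : ℂ) : (ratio α β z).im = (α - β) * z.im / normSq (z - β) := by
  rw [ratio, div_im, div_sub_div_same]
  congr 1
  simp only [sub_re, sub_im, ofReal_re, ofReal_im]
  ring

lemma normSq_sub_ofReal_pos (hz : z.im ≠ 0) (β : ℝ) : 0 < normSq (z - β) :=
  normSq_pos.2 fun h => hz (by simpa using congrArg im h)

lemma mapsTo_ratio_im_pos (hαβ : α < β) : MapsTo (ratio α β) {z | 0 < z.im} {w | w.im < 0} :=
  fun z (hz : 0 < z.im) => by
    change (ratio α β z).im < 0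
    rw [im_ratio]
    exact div_neg_of_neg_of_pos (mul_neg_of_neg_of_pos (by linarith) hz)
      (normSq_sub_ofReal_pos hz.ne' β)

lemma mapsTo_ratio_im_neg (hαβ : α < β) : MapsTo (ratio α β) {z | z.im < 0} {w | 0 < w.im} :=
  fun z (hz : z.im < 0) => by
    change 0 < (ratio α β z).im
    rw [im_ratio]
    exact div_pos (mul_pos_of_neg_of_neg (by linarith) hz) (normSq_sub_ofReal_pos hz.ne β)

lemma ratio_mem_slitPlane (hαβ : α < β) (hz : z ∉ ofReal '' Icc α β) :
    ratio α β z ∈ slitPlane := by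
  rcases lt_trichotomy z.im 0 with him | him | him
  · exact mem_slitPlane_iff.2 (Or.inr (mapsTo_ratio_im_neg hαβ him).ne')
  · obtain ⟨x, rfl⟩ : ∃ x : ℝ, (x : ℂ) = z := ⟨z.re, ext rfl (by simp [him])⟩
    have hx : x < α ∨ β < x := by
      by_contra! h
      exact hz ⟨x, h, rfl⟩
    rw [ratio_ofReal, ofReal_mem_slitPlane]
    rcases hx with hx | hx
    exacts [div_pos_of_neg_of_neg (by linarith) (by linarith), div_pos (by linarith) (by linarith)]
  · exact mem_slitPlane_iff.2 (Or.inr (mapsTo_ratio_im_pos hαβ him).ne)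

lemma ratio_sub_ratio {w : ℂ} (hw : w ≠ β) (hz : z ≠ β) :
    ratio α β w - ratio α β z = (β - α) * (z - w) / ((w - β) * (z - β)) := by
  rw [ratio, ratio, div_sub_div _ _ (sub_ne_zero.2 hw) (sub_ne_zero.2 hz)]
  ring

lemma tendsto_ratio_cobounded (α β : ℝ) : Tendsto (ratio α β) (cobounded ℂ) (𝓝 1) := by
  have h : Tendsto (fun z : ℂ => (1 - α * z⁻¹) / (1 - β * z⁻¹)) (cobounded ℂ)
      (𝓝 ((1 - α * 0) / (1 - β * 0))) :=
    (tendsto_const_nhds.sub (tendsto_const_nhds.mul tendsto_inv₀_cobounded)).div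
      (tendsto_const_nhds.sub (tendsto_const_nhds.mul tendsto_inv₀_cobounded)) (by simp)
  rw [show ((1 : ℂ) - α * 0) / (1 - β * 0) = 1 by simp] at h
  refine h.congr' ?_
  filter_upwards [eventually_ne_cobounded 0] with z hz
  rw [ratio, ← mul_div_mul_right _ _ hz]
  congr 1 <;> field_simp

lemma tendsto_ratio_nhdsNE_right (hαβ : α ≠ β) :
    Tendsto (ratio α β) (𝓝[≠] (β : ℂ)) (cobounded ℂ) := by
  have hβα : (β : ℂ) - α ≠ 0 := sub_ne_zero.2 (by exact_mod_cast hαβ.symm)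
  have h : Tendsto (fun z : ℂ => (z - β) / (z - α)) (𝓝[≠] (β : ℂ)) (𝓝[≠] 0) := by
    refine tendsto_nhdsWithin_iff.2 ⟨?_, ?_⟩
    · have : ContinuousAt (fun z : ℂ => (z - β) / (z - α)) β := by fun_prop (disch := exact hβα)
      simpa using this.tendsto.mono_left nhdsWithin_le_nhds
    · filter_upwards [self_mem_nhdsWithin,
        nhdsWithin_le_nhds (continuousAt_id.sub continuousAt_const |>.eventually_ne hβα)]
        with z hzβ hzα
      exact div_ne_zero (sub_ne_zero.2 hzβ) hzα
  refine (tendsto_inv₀_nhdsNE_zero.comp h).congr fun z => ?_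
  simp [ratio]

lemma continuousAt_ratio (hz : z ≠ β) : ContinuousAt (ratio α β) z :=
  (continuousAt_id.sub continuousAt_const).div (continuousAt_id.sub continuousAt_const)
    (sub_ne_zero.2 hz)

lemma sub_div_sub_lt_sub_div_sub {x y : ℝ} (hαβ : α < β) (hβx : β < x) (hxy : x < y) :
    (y - α) / (y - β) < (x - α) / (x - β) := by
  rw [div_lt_div_iff₀ (by linarith) (by linarith)]
  nlinarith

end Ratio

/-- `Q z = (r(x*) - r(z)) / (r(x*) + r(z))` with `r = √ratio` and `s = r(x*)`, so that
`F = log Q`. -/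
noncomputable def Q (α β s : ℝ) (z : ℂ) : ℂ := cayley s (ratio α β z).sqrt

noncomputable def F (α β s : ℝ) (z : ℂ) : ℂ := log (Q α β s z)

variable {α β s xstar : ℝ} {z : ℂ}

lemma mapsTo_Q_im_pos (hαβ : α < β) (hs : 0 < s) :
    MapsTo (Q α β s) {z | 0 < z.im} {w | 0 < w.im} :=
  fun _ hz => cayley_im_pos hs (sqrt_im_neg (mapsTo_ratio_im_pos hαβ hz))

lemma mapsTo_Q_im_neg (hαβ : α < β) (hs : 0 < s) :
    MapsTo (Q α β s) {z | z.im < 0} {w | w.im < 0} :=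
  fun _ hz => cayley_im_neg hs (sqrt_im_pos (mapsTo_ratio_im_neg hαβ hz))

lemma Q_ofReal {x : ℝ} (hx : 0 ≤ (x - α) / (x - β)) :
    Q α β s x = ((s - √((x - α) / (x - β))) / (s + √((x - α) / (x - β))) : ℝ) := by
  rw [Q, ratio_ofReal, sqrt_ofReal hx, cayley_ofReal]

lemma analyticAt_sqrt_ratio (hαβ : α < β) (hz : z ∉ ofReal '' Icc α β) :
    AnalyticAt ℂ (fun z => (ratio α β z).sqrt) z := by
  have hzβ : z - β ≠ 0 := sub_ne_zero.2 fun h => hz ⟨β, ⟨hαβ.le, le_rfl⟩, h.symm⟩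
  exact ((analyticAt_id.sub analyticAt_const).div (analyticAt_id.sub analyticAt_const) hzβ).cpow
    analyticAt_const (ratio_mem_slitPlane hαβ hz)

lemma analyticAt_Q (hαβ : α < β) (hs : 0 < s) (hz : z ∉ ofReal '' Icc α β) :
    AnalyticAt ℂ (Q α β s) z := by
  have hr := analyticAt_sqrt_ratio hαβ hz
  exact (analyticAt_const.sub hr).div (analyticAt_const.add hr)
    (ofReal_add_ne_zero hs (re_sqrt_nonneg _))

lemma Q_mem_slitPlane (hαβ : α < β) (hβx : β < xstar) (hs : 0 < s)
    (hs2 : s ^ 2 = (xstar - α) / (xstar - β)) (hz : z ∉ ofReal '' Icc α xstar) :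
    Q α β s z ∈ slitPlane := by
  rcases lt_trichotomy z.im 0 with him | him | him
  · exact mem_slitPlane_iff.2 (Or.inr (mapsTo_Q_im_neg hαβ hs him).ne)
  · obtain ⟨x, rfl⟩ : ∃ x : ℝ, (x : ℂ) = z := ⟨z.re, ext rfl (by simp [him])⟩
    have hx : x < α ∨ xstar < x := by
      by_contra! h
      exact hz ⟨x, h, rfl⟩
    have hpos : 0 < (x - α) / (x - β) := by
      rcases hx with hx | hx
      exacts [div_pos_of_neg_of_neg (by linarith) (by linarith),
        div_pos (by linarith) (by linarith)]
    have hlt : (x - α) / (x - β) < s ^ 2 := by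
      rcases hx with hx | hx
      · have h1 : (x - α) / (x - β) < 1 := (div_lt_one_of_neg (by linarith)).2 (by linarith)
        have h2 : 1 < (xstar - α) / (xstar - β) := (one_lt_div (by linarith)).2 (by linarith)
        linarith
      · exact hs2 ▸ sub_div_sub_lt_sub_div_sub hαβ hβx hx
    have hsqrt : √((x - α) / (x - β)) < s := by
      rw [Real.sqrt_lt' hs]
      exact hlt
    rw [Q_ofReal hpos.le, ofReal_mem_slitPlane]
    exact div_pos (by linarith) (by positivity)
  · exact mem_slitPlane_iff.2 (Or.inr (mapsTo_Q_im_pos hαβ hs him).ne')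

lemma analyticAt_F (hαβ : α < β) (hβx : β < xstar) (hs : 0 < s)
    (hs2 : s ^ 2 = (xstar - α) / (xstar - β)) (hz : z ∉ ofReal '' Icc α xstar) :
    AnalyticAt ℂ (F α β s) z :=
  (analyticAt_Q hαβ hs fun ⟨x, hx, hxz⟩ => hz ⟨x, ⟨hx.1, hx.2.trans hβx.le⟩, hxz⟩).clog
    (Q_mem_slitPlane hαβ hβx hs hs2 hz)

lemma exists_boundaryValues_eq_neg (hαβ : α < β) (hs : 0 < s) {x : ℝ} (hx : x ∈ Ioo α β) :
    ∃ Fp Fm : ℂ, Tendsto (F α β s) (𝓝[{z | 0 < z.im}] (x : ℂ)) (𝓝 Fp) ∧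
      Tendsto (F α β s) (𝓝[{z | z.im < 0}] (x : ℂ)) (𝓝 Fm) ∧ Fp = -Fm := by
  set a := (x - α) / (x - β)
  have ha : a < 0 := div_neg_of_pos_of_neg (by linarith [hx.1]) (by linarith [hx.2])
  set u : ℂ := √(-a) * I
  have hu_re : u.re = 0 := by simp [u]
  have hu_im : u.im ≠ 0 := by simpa [u] using (Real.sqrt_pos.2 (neg_pos.2 ha)).ne'
  have hratio := continuousAt_ratio (α := α) (ofReal_injective.ne hx.2.ne)
  have hratio_up := hratio.continuousWithinAt.tendsto_nhdsWithin (mapsTo_ratio_im_pos hαβ)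
  have hratio_down := hratio.continuousWithinAt.tendsto_nhdsWithin (mapsTo_ratio_im_neg hαβ)
  rw [ratio_ofReal] at hratio_up hratio_down
  have hup : Tendsto (F α β s) (𝓝[{z | 0 < z.im}] (x : ℂ)) (𝓝 (log (cayley s (-u)))) :=
    (((continuousAt_cayley hs (by rw [neg_re, hu_re, neg_zero])).tendsto.comp
      ((tendsto_sqrt_nhdsWithin_im_neg_of_neg ha).comp hratio_up)).clog
      (cayley_mem_slitPlane hs (by rwa [neg_im, neg_ne_zero])))
  have hdown : Tendsto (F α β s) (𝓝[{z | z.im < 0}] (x : ℂ)) (𝓝 (log (cayley s u))) :=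
    (((continuousAt_cayley hs hu_re.ge).tendsto.comp
      ((tendsto_sqrt_nhdsWithin_im_pos_of_neg ha).comp hratio_down)).clog
      (cayley_mem_slitPlane hs hu_im))
  refine ⟨_, _, hup, hdown, ?_⟩
  rw [cayley_neg, log_inv _ (mem_slitPlane_iff_arg.1 (cayley_mem_slitPlane hs hu_im)).1]

lemma exists_boundaryValues_eq_add_two_pi_I (hαβ : α < β) (hs : 0 < s)
    (hs2 : s ^ 2 = (xstar - α) / (xstar - β)) {x : ℝ} (hx : x ∈ Ioo β xstar) :
    ∃ Fp Fm : ℂ, Tendsto (F α β s) (𝓝[{z | 0 < z.im}] (x : ℂ)) (𝓝 Fp) ∧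
      Tendsto (F α β s) (𝓝[{z | z.im < 0}] (x : ℂ)) (𝓝 Fm) ∧ Fp = Fm + 2 * π * I := by
  have hxpos : 0 < (x - α) / (x - β) := div_pos (by linarith [hx.1]) (by linarith [hx.1])
  have hsqrt : s < √((x - α) / (x - β)) :=
    (Real.lt_sqrt hs.le).2 (hs2 ▸ sub_div_sub_lt_sub_div_sub hαβ hx.1 hx.2)
  have hq₀ : (((s - √((x - α) / (x - β))) / (s + √((x - α) / (x - β))) : ℝ) : ℂ).re < 0 := by
    rw [ofReal_re]
    exact div_neg_of_neg_of_pos (sub_neg.2 hsqrt) (by positivity)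
  have hQ : ContinuousAt (Q α β s) x := by
    refine (analyticAt_Q hαβ hs ?_).continuousAt
    rintro ⟨y, hy, hyx⟩
    linarith [hy.2, hx.1, ofReal_injective hyx]
  have hup := hQ.continuousWithinAt.tendsto_nhdsWithin
    ((mapsTo_Q_im_pos hαβ hs).mono_right fun w (hw : 0 < w.im) => hw.le)
  have hdown := hQ.continuousWithinAt.tendsto_nhdsWithin (mapsTo_Q_im_neg hαβ hs)
  rw [Q_ofReal hxpos.le] at hup hdown
  exact ⟨_, _, (tendsto_log_nhdsWithin_im_nonneg_of_re_neg_of_im_zero hq₀ (ofReal_im _)).comp hup,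
    (tendsto_log_nhdsWithin_im_neg_of_re_neg_of_im_zero hq₀ (ofReal_im _)).comp hdown, by ring⟩

lemma Q_eq_sub_mul (hβx : β < xstar) (hs : 0 < s) (hs2 : s ^ 2 = (xstar - α) / (xstar - β))
    (hz : z ≠ β) : Q α β s z = (z - xstar) *
      ((β - α) / ((xstar - β) * (z - β) * (s + (ratio α β z).sqrt) ^ 2)) := by
  have hxβ : (xstar : ℂ) ≠ β := by exact_mod_cast hβx.ne'
  have hs2' : (s : ℂ) ^ 2 = ratio α β xstar := by
    rw [ratio_ofReal, ← hs2, ofReal_pow]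
  have hden := ofReal_add_ne_zero hs (re_sqrt_nonneg (ratio α β z))
  have hzβ := sub_ne_zero.2 hz
  have hxβ' := sub_ne_zero.2 hxβ
  rw [Q, cayley_eq_sub_sq_div hden, sqrt_sq, hs2', ratio_sub_ratio hxβ hz]
  field_simp

lemma exists_bound_F_sub_log (hαβ : α < β) (hβx : β < xstar) (hs : 0 < s)
    (hs2 : s ^ 2 = (xstar - α) / (xstar - β)) :
    ∃ M, 0 < M ∧ ∀ᶠ z in 𝓝[≠] (xstar : ℂ), ‖F α β s z - log (z - xstar)‖ ≤ M := by
  set g : ℂ → ℂ := fun z => (β - α) / ((xstar - β) * (z - β) * (s + (ratio α β z).sqrt) ^ 2)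
  have hxβ : (xstar : ℂ) ≠ β := by exact_mod_cast hβx.ne'
  have hden : ((xstar : ℂ) - β) * (xstar - β) * (s + (ratio α β xstar).sqrt) ^ 2 ≠ 0 :=
    mul_ne_zero (mul_ne_zero (sub_ne_zero.2 hxβ) (sub_ne_zero.2 hxβ))
      (pow_ne_zero 2 (ofReal_add_ne_zero hs (re_sqrt_nonneg _)))
  have hg : ContinuousAt g xstar := by
    have hr := (analyticAt_sqrt_ratio hαβ fun ⟨y, hy, hyx⟩ =>
      (hy.2.trans_lt hβx).ne (ofReal_injective hyx)).continuousAt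
    exact continuousAt_const.div
      ((continuousAt_const.mul (continuousAt_id.sub continuousAt_const)).mul
        ((continuousAt_const.add hr).pow 2)) hden
  have hg0 : g xstar ≠ 0 :=
    div_ne_zero (sub_ne_zero.2 (by exact_mod_cast hαβ.ne')) hden
  refine ⟨|Real.log ‖g xstar‖| + 1 + 2 * π, by positivity, ?_⟩
  filter_upwards [nhdsWithin_le_nhds ((hg.tendsto.eventually_abs_log_norm_le hg0).and
    ((hg.eventually_ne hg0).and (eventually_ne_nhds hxβ))), self_mem_nhdsWithin]
    with z ⟨hlog, hgz, hzβ⟩ hzx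
  rw [F, Q_eq_sub_mul hβx hs hs2 hzβ]
  linarith [norm_log_mul_sub_log_le hgz (sub_ne_zero.2 hzx)]

lemma tendsto_F_cobounded (hs : 1 < s) :
    Tendsto (F α β s) (cobounded ℂ) (𝓝 (log (cayley s 1))) := by
  have hslit : cayley s 1 ∈ slitPlane := by
    rw [show (1 : ℂ) = ((1 : ℝ) : ℂ) by simp, cayley_ofReal, ofReal_mem_slitPlane]
    exact div_pos (by linarith) (by linarith)
  have hsqrt : Tendsto sqrt (𝓝 1) (𝓝 1) := by
    simpa using (continuousAt_sqrt (Or.inl zero_le_one : 0 ≤ (1 : ℂ).re ∨ _)).tendsto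
  exact ((continuousAt_cayley (zero_lt_one.trans hs) (by simp)).tendsto.comp
    (hsqrt.comp (tendsto_ratio_cobounded α β))).clog hslit

lemma tendsto_Q_nhds_left (hαβ : α ≠ β) (hs : 0 < s) : Tendsto (Q α β s) (𝓝 (α : ℂ)) (𝓝 1) := by
  have hratio : Tendsto (ratio α β) (𝓝 (α : ℂ)) (𝓝 0) := by
    simpa [ratio] using continuousAt_ratio (α := α) (ofReal_injective.ne hαβ) |>.tendsto
  have hsqrt : Tendsto sqrt (𝓝 0) (𝓝 0) := by
    simpa using (continuousAt_sqrt (Or.inl le_rfl : 0 ≤ (0 : ℂ).re ∨ _)).tendsto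
  have hcayley : cayley s 0 = 1 := by simp [cayley, hs.ne']
  exact hcayley ▸ (continuousAt_cayley hs le_rfl).tendsto.comp (hsqrt.comp hratio)

lemma tendsto_Q_nhdsNE_right (hαβ : α ≠ β) : Tendsto (Q α β s) (𝓝[≠] (β : ℂ)) (𝓝 (-1)) :=
  (tendsto_cayley_cobounded s).comp (tendsto_sqrt_cobounded.comp (tendsto_ratio_nhdsNE_right hαβ))

lemma eventually_norm_F_le {l : Filter ℂ} {c : ℂ} (hQ : Tendsto (Q α β s) l (𝓝 c))
    (hc : ‖c‖ = 1) : ∀ᶠ z in l, ‖F α β s z‖ ≤ 1 + π := by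
  filter_upwards [hQ.eventually_abs_log_norm_le (norm_ne_zero_iff.1 (hc ▸ one_ne_zero))]
    with z hz
  rw [hc, Real.log_one, abs_zero, zero_add] at hz
  exact (norm_log_le _).trans (by linarith)

lemma exists_bound_F_near_left_right (hαβ : α < β) (hs : 0 < s) :
    ∃ M δ : ℝ, 0 < M ∧ 0 < δ ∧ ∀ z : ℂ,
      ((z ≠ α ∧ ‖z - α‖ < δ) ∨ (z ≠ β ∧ ‖z - β‖ < δ)) → ‖F α β s z‖ ≤ M := by
  obtain ⟨δα, hδα, hα⟩ := exists_pos_of_eventually_nhdsNE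
    (eventually_norm_F_le ((tendsto_Q_nhds_left hαβ.ne hs).mono_left nhdsWithin_le_nhds) norm_one)
  obtain ⟨δβ, hδβ, hβ⟩ := exists_pos_of_eventually_nhdsNE
    (eventually_norm_F_le (tendsto_Q_nhdsNE_right (s := s) hαβ.ne) (by simp))
  refine ⟨1 + π, min δα δβ, by positivity, lt_min hδα hδβ, ?_⟩
  rintro z (⟨hz, hzδ⟩ | ⟨hz, hzδ⟩)
  exacts [hα z hz (hzδ.trans_le (min_le_left _ _)), hβ z hz (hzδ.trans_le (min_le_right _ _))]

end DegenerateAbelianIntegral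

open DegenerateAbelianIntegral in
/-- properties of the degenerate Abelian integral
`F(x) = log((r(x*) − r(x))/(r(x*) + r(x)))` with
`r(x) = √((x−α)/(x−β)) = √((x−α)(x−β))/(x−β)` (branch cut `[α,β]`, realized
by the principal power), and the principal branch of the logarithm. -/
theorem stmt7 (α β xstar : ℝ) (hαβ : α < β) (hβx : β < xstar)
    (r : ℂ → ℂ) (hr : ∀ z : ℂ, r z = ((z - (α:ℂ))/(z - (β:ℂ))) ^ ((2:ℂ)⁻¹))
    (F : ℂ → ℂ)
    (hF : ∀ z : ℂ, F z = Complex.log ((r (xstar:ℂ) - r z)/(r (xstar:ℂ) + r z)))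
    (F₀ : ℂ)
    (hF₀ : F₀ = Complex.log ((r (xstar:ℂ) - 1)/(r (xstar:ℂ) + 1))) :
    -- (1) analyticity off the cut [α, x*]
    (∀ z : ℂ, z ∉ Complex.ofReal '' Set.Icc α xstar → AnalyticAt ℂ F z) ∧
    -- (2) F₊ = −F₋ on (α, β)
    (∀ x ∈ Set.Ioo α β, ∃ Fp Fm : ℂ,
      Tendsto (fun ε : ℝ => F ((x:ℂ) + ε*Complex.I)) (nhdsWithin 0 (Set.Ioi 0)) (nhds Fp) ∧
      Tendsto (fun ε : ℝ => F ((x:ℂ) + ε*Complex.I)) (nhdsWithin 0 (Set.Iio 0)) (nhds Fm) ∧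
      Fp = -Fm) ∧
    -- (3) F₊ = F₋ + 2πi on (β, x*)
    (∀ x ∈ Set.Ioo β xstar, ∃ Fp Fm : ℂ,
      Tendsto (fun ε : ℝ => F ((x:ℂ) + ε*Complex.I)) (nhdsWithin 0 (Set.Ioi 0)) (nhds Fp) ∧
      Tendsto (fun ε : ℝ => F ((x:ℂ) + ε*Complex.I)) (nhdsWithin 0 (Set.Iio 0)) (nhds Fm) ∧
      Fp = Fm + 2*Real.pi*Complex.I) ∧
    -- (4) F(x) − log(x − x*) is bounded near x*
    (∃ M δ : ℝ, 0 < M ∧ 0 < δ ∧ ∀ z : ℂ, z ≠ (xstar:ℂ) → ‖z - (xstar:ℂ)‖ < δ →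
      ‖F z - Complex.log (z - (xstar:ℂ))‖ ≤ M) ∧
    -- (5) F(x) → F₀ at infinity
    Tendsto F (Bornology.cobounded ℂ) (nhds F₀) ∧
    -- (6) F bounded near α and near β
    (∃ M δ : ℝ, 0 < M ∧ 0 < δ ∧ ∀ z : ℂ,
      ((z ≠ (α:ℂ) ∧ ‖z - (α:ℂ)‖ < δ) ∨ (z ≠ (β:ℂ) ∧ ‖z - (β:ℂ)‖ < δ)) → ‖F z‖ ≤ M) := by
  have hxβ : 0 < xstar - β := sub_pos.2 hβx
  set s := √((xstar - α) / (xstar - β)) with hs_def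
  have hs2 : s ^ 2 = (xstar - α) / (xstar - β) := Real.sq_sqrt (div_pos (by linarith) hxβ).le
  have hs1 : 1 < s := by
    rw [hs_def, Real.lt_sqrt zero_le_one, one_pow, one_lt_div hxβ]
    linarith
  have hs : 0 < s := one_pos.trans hs1
  have hrx : r xstar = s := by
    rw [hr, ← sqrt_ofReal (div_pos (by linarith) hxβ).le, ← ratio_ofReal]
    rfl
  obtain rfl : F = DegenerateAbelianIntegral.F α β s := funext fun z => by rw [hF, hrx, hr]; rfl
  refine ⟨fun z => analyticAt_F hαβ hβx hs hs2, fun x hx => ?_, fun x hx => ?_, ?_,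
    by rw [hF₀, hrx]; exact tendsto_F_cobounded hs1, exists_bound_F_near_left_right hαβ hs⟩
  · obtain ⟨Fp, Fm, hp, hm, h⟩ := exists_boundaryValues_eq_neg hαβ hs hx
    exact ⟨Fp, Fm, hp.comp (tendsto_ofReal_add_mul_I_nhdsGT x),
      hm.comp (tendsto_ofReal_add_mul_I_nhdsLT x), h⟩
  · obtain ⟨Fp, Fm, hp, hm, h⟩ := exists_boundaryValues_eq_add_two_pi_I hαβ hs hs2 hx
    exact ⟨Fp, Fm, hp.comp (tendsto_ofReal_add_mul_I_nhdsGT x),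
      hm.comp (tendsto_ofReal_add_mul_I_nhdsLT x), h⟩
  · obtain ⟨M, hM, hev⟩ := exists_bound_F_sub_log hαβ hβx hs hs2
    obtain ⟨δ, hδ, hbound⟩ := exists_pos_of_eventually_nhdsNE hev
    exact ⟨M, δ, hM, hδ, hbound⟩
end

section
/- Let ν ≥ 1 be an integer and y > 0, and let P(s) = Σ_{j=0}^{ν−1} ((2j)!/(j!)²)·y^{2j}·s^{2(ν−1−j)}. Then ∫_{−2y}^{2y} P(ξ)·√(4y² − ξ²) dξ = 2π y² P(2y)/ν. -/
/-!
Substituting `ξ = 2y sin θ` turns the even moments of the semicircle weight into Wallis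
integrals: `∫_{-2y}^{2y} ξ^{2k} √(4y² - ξ²) dξ = 2π Cat_k y^{2k+2}`. Writing `ν = m + 1` and
indexing `P` by `i + j = m`, the left side becomes `2π y^{2m+2} Σ_{i+j=m} C(2i,i) Cat_j`
and `P(2y) = y^{2m} Σ_{i+j=m} C(2i,i) 4^j`. These convolutions equal `C(2m+2,m+1)/2`
(from `C(2i,i) = (i+1) Cat_i` and the Catalan recursion, symmetrised under `i ↔ j`) and
`(2m+1) C(2m,m)`, and the theorem reduces to `(m+1) C(2m+2,m+1) = 2(2m+1) C(2m,m)`.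
-/

open MeasureTheory Real Finset Finset.Nat intervalIntegral

theorem sum_antidiagonal_centralBinom_mul_catalan (n : ℕ) :
    2 * ∑ p ∈ antidiagonal n, p.1.centralBinom * catalan p.2 = (n + 1).centralBinom := by
  set f : ℕ × ℕ → ℕ := fun p => catalan p.1 * catalan p.2
  have hsym : ∑ p ∈ antidiagonal n, (p.1 + 1) * f p = ∑ p ∈ antidiagonal n, (p.2 + 1) * f p := by
    rw [← sum_antidiagonal_swap]
    exact sum_congr rfl fun p _ => by simp only [f, Prod.fst_swap, Prod.snd_swap]; ring
  calc 2 * ∑ p ∈ antidiagonal n, p.1.centralBinom * catalan p.2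
      = ∑ p ∈ antidiagonal n, (p.1 + 1) * f p + ∑ p ∈ antidiagonal n, (p.2 + 1) * f p := by
        simp only [f, ← hsym, ← succ_mul_catalan_eq_centralBinom, mul_assoc, two_mul]
    _ = ∑ p ∈ antidiagonal n, (n + 2) * f p := by
        rw [← sum_add_distrib]
        refine sum_congr rfl fun p hp => ?_
        rw [← add_mul, ← mem_antidiagonal.mp hp]
        ring
    _ = (n + 1).centralBinom := by
        rw [← mul_sum, ← catalan_succ', succ_mul_catalan_eq_centralBinom]

theorem sum_antidiagonal_centralBinom_mul_four_pow (n : ℕ) :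
    ∑ p ∈ antidiagonal n, p.1.centralBinom * 4 ^ p.2 = (2 * n + 1) * n.centralBinom := by
  induction n with
  | zero => simp
  | succ n ih =>
    have h := Nat.succ_mul_centralBinom_succ n
    rw [sum_antidiagonal_succ']
    simp only [pow_succ, ← mul_assoc, ← sum_mul, ih, pow_zero, mul_one]
    linarith

theorem integral_sin_pow_even_centered (k : ℕ) :
    ∫ x in -(π / 2)..π / 2, sin x ^ (2 * k) = π * k.centralBinom / 4 ^ k := by
  induction k with
  | zero => simp
  | succ k ih =>
    have h := Nat.succ_mul_centralBinom_succ k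
    rw [mul_add_one, integral_sin_pow, ih, cos_neg, cos_pi_div_two]
    rify at h
    field_simp
    push_cast
    linear_combination (-2 * π * 4 ^ k) * h

theorem four_mul_centralBinom_sub_centralBinom_succ (k : ℕ) :
    4 * (k.centralBinom : ℝ) - (k + 1).centralBinom = 2 * catalan k := by
  have h := Nat.succ_mul_centralBinom_succ k
  have hcat := succ_mul_catalan_eq_centralBinom k
  rify at h hcat
  apply mul_left_cancel₀ (by positivity : (k : ℝ) + 1 ≠ 0)
  linear_combination (-1 : ℝ) * h - 2 * hcat

theorem integral_sin_pow_even_mul_cos_sq_centered (k : ℕ) :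
    ∫ x in -(π / 2)..π / 2, sin x ^ (2 * k) * cos x ^ 2 = π * catalan k / (2 * 4 ^ k) := by
  have hint (n : ℕ) : IntervalIntegrable (fun x => sin x ^ n) volume (-(π / 2)) (π / 2) :=
    (continuous_sin.pow n).intervalIntegrable _ _
  calc ∫ x in -(π / 2)..π / 2, sin x ^ (2 * k) * cos x ^ 2
      = (∫ x in -(π / 2)..π / 2, sin x ^ (2 * k))
          - ∫ x in -(π / 2)..π / 2, sin x ^ (2 * (k + 1)) := by
        rw [← integral_sub (hint _) (hint _)]
        exact integral_congr fun x _ => by rw [cos_sq']; ring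
    _ = π * catalan k / (2 * 4 ^ k) := by
        rw [integral_sin_pow_even_centered, integral_sin_pow_even_centered, pow_succ]
        field_simp
        linear_combination 2 * four_mul_centralBinom_sub_centralBinom_succ k

theorem integral_pow_even_mul_sqrt_one_sub_sq (k : ℕ) :
    ∫ u in (-1 : ℝ)..1, u ^ (2 * k) * √(1 - u ^ 2) = π * catalan k / (2 * 4 ^ k) := by
  calc ∫ u in (-1 : ℝ)..1, u ^ (2 * k) * √(1 - u ^ 2)
      = ∫ u in sin (-(π / 2))..sin (π / 2), u ^ (2 * k) * √(1 - u ^ 2) := by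
        rw [sin_neg, sin_pi_div_two]
    _ = ∫ x in -(π / 2)..π / 2, (sin x ^ (2 * k) * √(1 - sin x ^ 2)) * cos x :=
        (integral_comp_mul_deriv (fun x _ => hasDerivAt_sin x) continuousOn_cos
          (by fun_prop)).symm
    _ = ∫ x in -(π / 2)..π / 2, sin x ^ (2 * k) * cos x ^ 2 := by
        refine integral_congr fun x hx => ?_
        rw [Set.uIcc_of_le (by linarith [pi_pos])] at hx
        rw [← cos_eq_sqrt_one_sub_sin_sq hx.1 hx.2]
        ring
    _ = π * catalan k / (2 * 4 ^ k) := integral_sin_pow_even_mul_cos_sq_centered k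

theorem integral_pow_even_mul_sqrt_four_mul_sq_sub_sq {r : ℝ} (hr : 0 ≤ r) (k : ℕ) :
    ∫ x in -(2 * r)..2 * r, x ^ (2 * k) * √(4 * r ^ 2 - x ^ 2)
      = 2 * π * catalan k * r ^ (2 * k + 2) := by
  have hscale (u : ℝ) : (2 * r * u) ^ (2 * k) * √(4 * r ^ 2 - (2 * r * u) ^ 2)
      = (2 * r) ^ (2 * k + 1) * (u ^ (2 * k) * √(1 - u ^ 2)) := by
    rw [show 4 * r ^ 2 - (2 * r * u) ^ 2 = (2 * r) ^ 2 * (1 - u ^ 2) by ring,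
      sqrt_mul (by positivity), sqrt_sq (by positivity)]
    ring
  have h := smul_integral_comp_mul_left
    (fun x => x ^ (2 * k) * √(4 * r ^ 2 - x ^ 2)) (a := (-1 : ℝ)) (b := 1) (2 * r)
  simp only [hscale, intervalIntegral.integral_const_mul, integral_pow_even_mul_sqrt_one_sub_sq,
    smul_eq_mul, mul_neg_one, mul_one] at h
  rw [← h, show (4 : ℝ) ^ k = 2 ^ (2 * k) by rw [pow_mul]; norm_num]
  field_simp
  ring

/-- The polynomial `P` of the theorem for `ν = m + 1`, indexed by `i + j = m`. -/
def centralBinomPoly (m : ℕ) (y s : ℝ) : ℝ :=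
  ∑ p ∈ antidiagonal m, (p.1.centralBinom : ℝ) * y ^ (2 * p.1) * s ^ (2 * p.2)

theorem centralBinomPoly_eq_sum_range (m : ℕ) (y s : ℝ) :
    centralBinomPoly m y s
      = ∑ j ∈ range (m + 1), ((2 * j).choose j : ℝ) * y ^ (2 * j) * s ^ (2 * (m + 1 - 1 - j)) := by
  rw [centralBinomPoly, sum_antidiagonal_eq_sum_range_succ_mk, Nat.add_sub_cancel]
  rfl

theorem integral_centralBinomPoly_mul_sqrt {y : ℝ} (hy : 0 ≤ y) (m : ℕ) :
    ∫ ξ in -(2 * y)..2 * y, centralBinomPoly m y ξ * √(4 * y ^ 2 - ξ ^ 2)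
      = π * (m + 1).centralBinom * y ^ (2 * m + 2) := by
  have hint (j : ℕ) :
      IntervalIntegrable (fun ξ => ξ ^ (2 * j) * √(4 * y ^ 2 - ξ ^ 2)) volume (-(2 * y)) (2 * y) :=
    (by fun_prop : Continuous _).intervalIntegrable _ _
  conv_lhs => simp only [centralBinomPoly, sum_mul, mul_assoc]
  rw [integral_finsetSum fun p _ => ((hint p.2).const_mul _).const_mul _]
  simp only [intervalIntegral.integral_const_mul, integral_pow_even_mul_sqrt_four_mul_sq_sub_sq hy]
  have hcat := sum_antidiagonal_centralBinom_mul_catalan m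
  rify at hcat
  calc ∑ p ∈ antidiagonal m,
        (p.1.centralBinom : ℝ) * (y ^ (2 * p.1) * (2 * π * catalan p.2 * y ^ (2 * p.2 + 2)))
      = π * y ^ (2 * m + 2) * (2 * ∑ p ∈ antidiagonal m, (p.1.centralBinom : ℝ) * catalan p.2) := by
        rw [mul_sum, mul_sum]
        refine sum_congr rfl fun p hp => ?_
        rw [← mem_antidiagonal.mp hp]
        ring
    _ = π * (m + 1).centralBinom * y ^ (2 * m + 2) := by rw [hcat]; ring

theorem centralBinomPoly_two_mul (m : ℕ) (y : ℝ) :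
    centralBinomPoly m y (2 * y) = (2 * m + 1) * m.centralBinom * y ^ (2 * m) := by
  have hfour := sum_antidiagonal_centralBinom_mul_four_pow m
  rify at hfour
  calc centralBinomPoly m y (2 * y)
      = y ^ (2 * m) * ∑ p ∈ antidiagonal m, (p.1.centralBinom : ℝ) * 4 ^ p.2 := by
        rw [centralBinomPoly, mul_sum]
        refine sum_congr rfl fun p hp => ?_
        rw [← mem_antidiagonal.mp hp, mul_pow, pow_mul 2, pow_mul y 2 p.2]
        ring
    _ = (2 * m + 1) * m.centralBinom * y ^ (2 * m) := by rw [hfour]; ring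

/-- `∫_{−2y}^{2y} P(ξ)√(4y²−ξ²) dξ = 2πy²P(2y)/ν` for the
polynomial `P(s) = Σ_{j<ν} C(2j,j) y^{2j} s^{2(ν−1−j)}`. -/
theorem stmt14 (ν : ℕ) (hν : 1 ≤ ν) (y : ℝ) (hy : 0 < y)
    (P : ℝ → ℝ)
    (hP : ∀ s : ℝ, P s = ∑ j ∈ Finset.range ν,
      (Nat.choose (2*j) j : ℝ) * y^(2*j) * s^(2*(ν-1-j))) :
    (∫ ξ in (-(2*y))..(2*y), P ξ * Real.sqrt (4*y^2 - ξ^2))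
      = 2 * Real.pi * y^2 * P (2*y) / ν := by
  obtain ⟨m, rfl⟩ : ∃ m, ν = m + 1 := ⟨ν - 1, by omega⟩
  obtain rfl : P = centralBinomPoly m y := funext fun s => by
    rw [hP, centralBinomPoly_eq_sum_range]
  have h := Nat.succ_mul_centralBinom_succ m
  rify at h
  rw [integral_centralBinomPoly_mul_sqrt hy.le, centralBinomPoly_two_mul,
    eq_div_iff (by positivity)]
  push_cast
  linear_combination π * y ^ (2 * m + 2) * h
end

section
/- Let ν ≥ 1 be an integer and y > 0, and let P(s) = Σ_{j=0}^{ν−1} ((2j)!/(j!)²)·y^{2j}·s^{2(ν−1−j)}. Then the polynomial identity (ξ² − 4y²)·((2ν−2)·P(ξ) − ξ·P′(ξ)) = 4y²·(P(ξ) − P(2y)) holds for all ξ; in particular (2ν−2)P(ξ) − ξP′(ξ) = (4y²/(ξ²−4y²))·(P(ξ) − P(2y)) for ξ² ≠ 4y². -/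
/-!
Write `a = y²`, `t = ξ²` and `c_j = C(2j, j)`, so that `P(ξ) = F(t) = ∑_{j ≤ m} c_j a^j t^{m-j}`
with `m = ν - 1`. The Euler operator `ξ d/dξ` multiplies `ξ^{2(m-j)}` by `2(m-j)`, hence
`2m P - ξ P' = 2 ∑ j c_j a^j t^{m-j}`. Both sides of the identity are then sums that obey the
Horner recursion `S_{m+1}(t) = t S_m(t) + (last term)`, and induction on `m` closes the identity
using only `(m+1) c_{m+1} = 2(2m+1) c_m` and its consequence `F(4a) = (2m+1) c_m a^m`.
-/

open Finset Nat

theorem mul_deriv_sum_mul_pow {𝕜 ι : Type*} [NontriviallyNormedField 𝕜] (S : Finset ι)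
    (c : ι → 𝕜) (n : ι → ℕ) (x : 𝕜) :
    x * deriv (fun x => ∑ i ∈ S, c i * x ^ n i) x = ∑ i ∈ S, (n i : 𝕜) * c i * x ^ n i := by
  rw [deriv_fun_sum fun i _ => (differentiableAt_pow _).const_mul _, mul_sum]
  refine sum_congr rfl fun i _ => ?_
  rw [deriv_const_mul _ (differentiableAt_pow _), deriv_pow_field]
  rcases n i with _ | k
  · simp
  · rw [add_tsub_cancel_right, pow_succ]
    ring

theorem sum_range_succ_mul_pow_sub {R : Type*} [CommSemiring R] (f : ℕ → R) (t : R) (m : ℕ) :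
    ∑ j ∈ range (m + 2), f j * t ^ (m + 1 - j)
      = t * ∑ j ∈ range (m + 1), f j * t ^ (m - j) + f (m + 1) := by
  rw [sum_range_succ, Nat.sub_self, pow_zero, mul_one, mul_sum]
  congr 1
  refine sum_congr rfl fun j hj => ?_
  rw [Nat.sub_add_comm (mem_range_succ_iff.mp hj), pow_succ]
  ring

theorem succ_mul_centralBinom_succ_real (m : ℕ) :
    ((m : ℝ) + 1) * centralBinom (m + 1) = 2 * (2 * m + 1) * centralBinom m := by
  exact_mod_cast succ_mul_centralBinom_succ m

theorem sum_centralBinom_mul_pow_mul_four_mul_pow (a : ℝ) (m : ℕ) :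
    ∑ j ∈ range (m + 1), (centralBinom j : ℝ) * a ^ j * (4 * a) ^ (m - j)
      = (2 * m + 1) * centralBinom m * a ^ m := by
  induction m with
  | zero => simp
  | succ m ih =>
    rw [sum_range_succ_mul_pow_sub (fun j => (centralBinom j : ℝ) * a ^ j), ih]
    push_cast
    linear_combination (-2 * a ^ (m + 1)) * succ_mul_centralBinom_succ_real m

theorem sub_four_mul_mul_sum_mul_centralBinom (a t : ℝ) (m : ℕ) :
    (t - 4 * a) * ∑ j ∈ range (m + 1), (j : ℝ) * centralBinom j * a ^ j * t ^ (m - j)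
      = 2 * a * (∑ j ∈ range (m + 1), (centralBinom j : ℝ) * a ^ j * t ^ (m - j)
          - ∑ j ∈ range (m + 1), (centralBinom j : ℝ) * a ^ j * (4 * a) ^ (m - j)) := by
  induction m with
  | zero => simp
  | succ m ih =>
    rw [sum_range_succ_mul_pow_sub (fun j => (j : ℝ) * centralBinom j * a ^ j),
      sum_range_succ_mul_pow_sub (fun j => (centralBinom j : ℝ) * a ^ j),
      sum_range_succ_mul_pow_sub (fun j => (centralBinom j : ℝ) * a ^ j),
      sum_centralBinom_mul_pow_mul_four_mul_pow]
    rw [sum_centralBinom_mul_pow_mul_four_mul_pow] at ih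
    push_cast
    linear_combination t * ih + (t - 4 * a) * a ^ (m + 1) * succ_mul_centralBinom_succ_real m

theorem stmt16_general (ν : ℕ) (hν : 1 ≤ ν) (y : ℝ)
    (P : ℝ → ℝ)
    (hP : ∀ s : ℝ, P s = ∑ j ∈ Finset.range ν,
      (Nat.choose (2*j) j : ℝ) * y^(2*j) * s^(2*(ν-1-j))) :
    (∀ ξ : ℝ, (ξ^2 - 4*y^2) * ((2*(ν:ℝ) - 2) * P ξ - ξ * deriv P ξ)
        = 4*y^2 * (P ξ - P (2*y))) ∧
    (∀ ξ : ℝ, ξ^2 ≠ 4*y^2 →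
      (2*(ν:ℝ) - 2) * P ξ - ξ * deriv P ξ
        = (4*y^2/(ξ^2 - 4*y^2)) * (P ξ - P (2*y))) := by
  obtain ⟨m, rfl⟩ : ∃ m, ν = m + 1 := ⟨ν - 1, by omega⟩
  have hP_sq : ∀ s,
      P s = ∑ j ∈ range (m + 1), (centralBinom j : ℝ) * (y ^ 2) ^ j * (s ^ 2) ^ (m - j) := by
    intro s
    simp only [hP, add_tsub_cancel_right, centralBinom, pow_mul]
  have euler : ∀ ξ, (2 * ((m + 1 : ℕ) : ℝ) - 2) * P ξ - ξ * deriv P ξ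
      = 2 * ∑ j ∈ range (m + 1), (j : ℝ) * centralBinom j * (y ^ 2) ^ j * (ξ ^ 2) ^ (m - j) := by
    intro ξ
    rw [show P = _ from funext hP, mul_deriv_sum_mul_pow, mul_sum, mul_sum, ← sum_sub_distrib]
    refine sum_congr rfl fun j hj => ?_
    push_cast [Nat.cast_sub (mem_range_succ_iff.mp hj), add_tsub_cancel_right, centralBinom,
      pow_mul]
    ring
  have identity : ∀ ξ : ℝ, (ξ^2 - 4*y^2) * ((2*((m + 1 : ℕ):ℝ) - 2) * P ξ - ξ * deriv P ξ)
      = 4*y^2 * (P ξ - P (2*y)) := by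
    intro ξ
    rw [euler, hP_sq, hP_sq, mul_pow, show (2 : ℝ) ^ 2 = 4 by norm_num]
    linear_combination 2 * sub_four_mul_mul_sum_mul_centralBinom (y ^ 2) (ξ ^ 2) m
  refine ⟨identity, fun ξ hξ => ?_⟩
  rw [div_mul_eq_mul_div, eq_div_iff (sub_ne_zero.mpr hξ)]
  linear_combination identity ξ

/-- the differential identity
`(ξ²−4y²)((2ν−2)P(ξ) − ξP′(ξ)) = 4y²(P(ξ) − P(2y))` for
`P(s) = Σ_{j<ν} C(2j,j) y^{2j} s^{2(ν−1−j)}`, together with the resulting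
quotient form away from `ξ² = 4y²`. -/
theorem stmt16 (ν : ℕ) (hν : 1 ≤ ν) (y : ℝ) (hy : 0 < y)
    (P : ℝ → ℝ)
    (hP : ∀ s : ℝ, P s = ∑ j ∈ Finset.range ν,
      (Nat.choose (2*j) j : ℝ) * y^(2*j) * s^(2*(ν-1-j))) :
    (∀ ξ : ℝ, (ξ^2 - 4*y^2) * ((2*(ν:ℝ) - 2) * P ξ - ξ * deriv P ξ)
        = 4*y^2 * (P ξ - P (2*y))) ∧
    (∀ ξ : ℝ, ξ^2 ≠ 4*y^2 →
      (2*(ν:ℝ) - 2) * P ξ - ξ * deriv P ξ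
        = (4*y^2/(ξ^2 - 4*y^2)) * (P ξ - P (2*y))) :=
  stmt16_general ν hν y P hP
end
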